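/- Let T = {(x,y) ∈ ℝ² : 0 < x, 0 < y, x + y < 1} and write z = 1 − x − y. Define the projective Reverse map f : T → T (almost everywhere) by: f(x,y) = ((2x−1)/x, y/x) if x > 1/2; f(x,y) = (x/y, (2y−1)/y) if y > 1/2; f(x,y) = (x/z, y/z) if z > 1/2; and f(x,y) = (1−2x, 1−2y) if x < 1/2, y < 1/2 and z < 1/2. Let μ be the measure on ℝ² obtained by restricting Lebesgue measure to T and taking the density (x,y) ↦ 1/((1−x)(1−y)(x+y)). Then the pushforward of μ under f equals μ; i.e. the density of the invariant measure of the projective Reverse algorithm on the unit simplex is 1/((1−x)(1−y)(1−z)). -/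

import Mathlib

open MeasureTheory Set

/-- The open unit simplex `T = {(x,y) : 0 < x, 0 < y, x + y < 1}` in the plane. -/
def simplexT : Set (ℝ × ℝ) := {p | 0 < p.1 ∧ 0 < p.2 ∧ p.1 + p.2 < 1}

/-- The projective Reverse map in the coordinates `(x,y)`, with `z = 1 - x - y`. -/
noncomputable def revProj : ℝ × ℝ → ℝ × ℝ := fun p =>
  if 1 / 2 < p.1 then ((2 * p.1 - 1) / p.1, p.2 / p.1)
  else if 1 / 2 < p.2 then (p.1 / p.2, (2 * p.2 - 1) / p.2)
  else if 1 / 2 < 1 - p.1 - p.2 then (p.1 / (1 - p.1 - p.2), p.2 / (1 - p.1 - p.2))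
  else (1 - 2 * p.1, 1 - 2 * p.2)

/-- Lebesgue measure restricted to `T` with density `1/((1-x)(1-y)(x+y))`,
i.e. `1/((1-x)(1-y)(1-z))` with `z = 1-x-y`. -/
noncomputable def revMeasure : Measure (ℝ × ℝ) :=
  (volume.restrict simplexT).withDensity fun p =>
    ENNReal.ofReal (1 / ((1 - p.1) * (1 - p.2) * (p.1 + p.2)))

/-!
In the homogeneous coordinates `v = (x, y, x + y + z)` of the cone, each branch of `revProj` is
the projectivization of a linear branch of the Reverse map `F`, so its inverse branch is a
projective map `w ↦ [M (w, 1)]`. Such a map has Jacobian determinant `det M / d³`, `d` being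
the last homogeneous coordinate of `M (w, 1)`, while the cone density
`1 / ((x + y) (y + z) (z + x))` is homogeneous of degree `-3`; the two powers of `d` cancel, and
the transfer identity `∑ᵢ |det Mᵢ| ρ(Mᵢ v) = ρ(v)` over the four inverse branches becomes a
rational identity in `(x, y)`. The change-of-variables formula on the four regions, which cover
the simplex up to three null lines, then turns it into invariance.
-/

open Function Matrix

section InverseBranches

variable {E : Type*} [NormedAddCommGroup E] [NormedSpace ℝ E] [FiniteDimensional ℝ E]
  [MeasurableSpace E] [BorelSpace E] (μ : Measure E) [μ.IsAddHaarMeasure]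

theorem addHaar_preimage_singleton_eq_zero {L : E →ₗ[ℝ] ℝ} (hL : L ≠ 0) (c : ℝ) :
    μ (L ⁻¹' {c}) = 0 := by
  obtain ⟨v, hv⟩ : ∃ v, L v ≠ 0 := by
    by_contra! h
    exact hL (LinearMap.ext h)
  have hpre : L ⁻¹' {c} = (fun y => y + -((c / L v) • v)) ⁻¹' (LinearMap.ker L) := by
    ext y
    simp [← sub_eq_add_neg, sub_eq_zero, hv]
  rw [hpre, measure_preimage_add_right]
  exact Measure.addHaar_submodule μ _ (mt LinearMap.ker_eq_top.mp hL)

theorem map_withDensity_eq_withDensity_sum_of_inverseBranches {ι : Type*} [Fintype ι]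
    {f : E → E} {s t : Set E} {R : ι → Set E} {g : ι → E → E} {g' : ι → E → E →L[ℝ] E}
    {ρ : E → ENNReal} (hf : Measurable f) (ht : MeasurableSet t) (hρ : Measurable ρ)
    (hR : Pairwise (Disjoint on R)) (hRs : ⋃ i, R i =ᵐ[μ] s)
    (hfR : ∀ i, MapsTo f (R i) t) (hgt : ∀ i, MapsTo (g i) t (R i))
    (hinv : ∀ i, InvOn (g i) f (R i) t)
    (hg' : ∀ i, ∀ w ∈ t, HasFDerivWithinAt (g i) (g' i w) t w) :
    ((μ.restrict s).withDensity ρ).map f =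
      (μ.restrict t).withDensity fun w => ∑ i, ENNReal.ofReal |(g' i w).det| * ρ (g i w) := by
  have himage : ∀ (A : Set E) i, g i '' (A ∩ t) = R i ∩ f ⁻¹' A := by
    intro A i
    ext p
    constructor
    · rintro ⟨w, ⟨hwA, hwt⟩, rfl⟩
      exact ⟨hgt i hwt, by rwa [mem_preimage, (hinv i).2 hwt]⟩
    · rintro ⟨hpR, hpA⟩
      exact ⟨f p, ⟨hpA, hfR i hpR⟩, (hinv i).1 hpR⟩
  ext A hA
  have hAt : MeasurableSet (A ∩ t) := hA.inter ht
  have hinj : ∀ i, InjOn (g i) (A ∩ t) := fun i => (hinv i).2.injOn.mono inter_subset_right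
  have hg'A : ∀ i, ∀ w ∈ A ∩ t, HasFDerivWithinAt (g i) (g' i w) (A ∩ t) w :=
    fun i w hw => (hg' i w hw.2).mono inter_subset_right
  rw [Measure.map_apply hf hA, withDensity_apply _ (hf hA), withDensity_apply _ hA,
    Measure.restrict_restrict (hf hA), Measure.restrict_restrict hA,
    lintegral_finsetSum' _ fun i _ => ?_]
  · calc ∫⁻ p in f ⁻¹' A ∩ s, ρ p ∂μ = ∫⁻ p in ⋃ i, R i ∩ f ⁻¹' A, ρ p ∂μ := by
          refine setLIntegral_congr ?_
          rw [← iUnion_inter, inter_comm]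
          exact hRs.symm.inter (Filter.EventuallyEq.refl _ _)
      _ = ∑ i, ∫⁻ p in R i ∩ f ⁻¹' A, ρ p ∂μ := by
          rw [lintegral_iUnion (fun i => ?_) fun i j hij => ?_, tsum_fintype]
          · rw [← himage]
            exact measurable_image_of_fderivWithin hAt (hg'A i) (hinj i)
          · exact (hR hij).mono inter_subset_left inter_subset_left
      _ = _ := by
          refine Finset.sum_congr rfl fun i _ => ?_
          rw [← himage]
          exact lintegral_image_eq_lintegral_abs_det_fderiv_mul μ hAt (hg'A i) (hinj i) ρ
  · exact (aemeasurable_ofReal_abs_det_fderivWithin μ hAt (hg'A i)).mul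
      (hρ.comp_aemeasurable
        (ContinuousOn.aemeasurable (fun w hw => (hg'A i w hw).continuousWithinAt) hAt))

end InverseBranches

section ProjectiveMap

def homogenize (w : ℝ × ℝ) : Fin 3 → ℝ := ![w.1, w.2, 1]

noncomputable def dehomogenize (v : Fin 3 → ℝ) : ℝ × ℝ := (v 0 / v 2, v 1 / v 2)

noncomputable def projectiveMap (M : Matrix (Fin 3) (Fin 3) ℝ) (w : ℝ × ℝ) : ℝ × ℝ :=
  dehomogenize (M *ᵥ homogenize w)

theorem mulVec_homogenize_apply (M : Matrix (Fin 3) (Fin 3) ℝ) (w : ℝ × ℝ) (i : Fin 3) :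
    (M *ᵥ homogenize w) i = M i 0 * w.1 + M i 1 * w.2 + M i 2 := by
  simp [homogenize, mulVec, dotProduct, Fin.sum_univ_three]

theorem dehomogenize_homogenize (w : ℝ × ℝ) : dehomogenize (homogenize w) = w := by
  simp [dehomogenize, homogenize]

theorem dehomogenize_smul {c : ℝ} (hc : c ≠ 0) (v : Fin 3 → ℝ) :
    dehomogenize (c • v) = dehomogenize v := by
  simp [dehomogenize, mul_div_mul_left _ _ hc]

theorem homogenize_dehomogenize {v : Fin 3 → ℝ} (hv : v 2 ≠ 0) :
    homogenize (dehomogenize v) = (v 2)⁻¹ • v := by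
  ext i
  fin_cases i <;> simp [homogenize, dehomogenize, div_eq_inv_mul, hv]

theorem projectiveMap_one (w : ℝ × ℝ) : projectiveMap 1 w = w := by
  rw [projectiveMap, one_mulVec, dehomogenize_homogenize]

theorem projectiveMap_projectiveMap (N M : Matrix (Fin 3) (Fin 3) ℝ) {w : ℝ × ℝ}
    (hw : (M *ᵥ homogenize w) 2 ≠ 0) :
    projectiveMap N (projectiveMap M w) = projectiveMap (N * M) w := by
  rw [projectiveMap, projectiveMap, homogenize_dehomogenize hw, mulVec_smul, mulVec_mulVec,
    dehomogenize_smul (inv_ne_zero hw), projectiveMap]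

theorem projectiveMap_fst_mul (M : Matrix (Fin 3) (Fin 3) ℝ) {w : ℝ × ℝ}
    (hw : (M *ᵥ homogenize w) 2 ≠ 0) :
    (projectiveMap M w).1 * (M *ᵥ homogenize w) 2 = (M *ᵥ homogenize w) 0 :=
  div_mul_cancel₀ _ hw

theorem projectiveMap_snd_mul (M : Matrix (Fin 3) (Fin 3) ℝ) {w : ℝ × ℝ}
    (hw : (M *ᵥ homogenize w) 2 ≠ 0) :
    (projectiveMap M w).2 * (M *ᵥ homogenize w) 2 = (M *ᵥ homogenize w) 1 :=
  div_mul_cancel₀ _ hw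

noncomputable def projectiveMapDeriv (M : Matrix (Fin 3) (Fin 3) ℝ) (w : ℝ × ℝ) :
    (ℝ × ℝ) →L[ℝ] ℝ × ℝ :=
  let v := M *ᵥ homogenize w
  LinearMap.toContinuousLinearMap <|
    toLin (Module.Basis.finTwoProd ℝ) (Module.Basis.finTwoProd ℝ)
      !![(M 0 0 * v 2 - v 0 * M 2 0) / v 2 ^ 2, (M 0 1 * v 2 - v 0 * M 2 1) / v 2 ^ 2;
        (M 1 0 * v 2 - v 1 * M 2 0) / v 2 ^ 2, (M 1 1 * v 2 - v 1 * M 2 1) / v 2 ^ 2]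

theorem det_projectiveMapDeriv (M : Matrix (Fin 3) (Fin 3) ℝ) {w : ℝ × ℝ}
    (hw : (M *ᵥ homogenize w) 2 ≠ 0) :
    (projectiveMapDeriv M w).det = M.det / (M *ᵥ homogenize w) 2 ^ 3 := by
  rw [projectiveMapDeriv, LinearMap.det_toContinuousLinearMap, LinearMap.det_toLin,
    det_fin_two_of, det_fin_three]
  simp only [mulVec_homogenize_apply] at hw ⊢
  field_simp
  ring

theorem hasFDerivAt_mulVec_homogenize (M : Matrix (Fin 3) (Fin 3) ℝ) (i : Fin 3) (w : ℝ × ℝ) :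
    HasFDerivAt (fun w => (M *ᵥ homogenize w) i)
      (M i 0 • ContinuousLinearMap.fst ℝ ℝ ℝ + M i 1 • ContinuousLinearMap.snd ℝ ℝ ℝ) w := by
  simp only [mulVec_homogenize_apply]
  exact ((hasFDerivAt_fst.const_mul (M i 0)).add (hasFDerivAt_snd.const_mul (M i 1))).add_const _

theorem hasFDerivAt_projectiveMap (M : Matrix (Fin 3) (Fin 3) ℝ) {w : ℝ × ℝ}
    (hw : (M *ᵥ homogenize w) 2 ≠ 0) :
    HasFDerivAt (projectiveMap M) (projectiveMapDeriv M w) w := by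
  have hinv := (hasDerivAt_inv hw).comp_hasFDerivAt w (hasFDerivAt_mulVec_homogenize M 2 w)
  have h0 := (hasFDerivAt_mulVec_homogenize M 0 w).mul hinv
  have h1 := (hasFDerivAt_mulVec_homogenize M 1 w).mul hinv
  refine (h0.prodMk h1).congr_fderiv ?_
  ext <;> simp [projectiveMapDeriv] <;> field_simp <;> ring

end ProjectiveMap

section ConeDensity

/-- The density `1 / ((x + y) (y + z) (z + x))` of the cone, at `v = (x, y, x + y + z)`. -/
noncomputable def coneDensity (v : Fin 3 → ℝ) : ℝ := 1 / ((v 2 - v 0) * (v 2 - v 1) * (v 0 + v 1))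

theorem coneDensity_homogenize (p : ℝ × ℝ) :
    coneDensity (homogenize p) = 1 / ((1 - p.1) * (1 - p.2) * (p.1 + p.2)) :=
  rfl

theorem coneDensity_smul (c : ℝ) (v : Fin 3 → ℝ) :
    coneDensity (c • v) = (c ^ 3)⁻¹ * coneDensity v := by
  have h : (c * v 2 - c * v 0) * (c * v 2 - c * v 1) * (c * v 0 + c * v 1) =
      c ^ 3 * ((v 2 - v 0) * (v 2 - v 1) * (v 0 + v 1)) := by ring
  simp only [coneDensity, Pi.smul_apply, smul_eq_mul, h, one_div, mul_inv]

theorem coneDensity_of_denom_eq {v : Fin 3 → ℝ} {k D : ℝ}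
    (h : (v 2 - v 0) * (v 2 - v 1) * (v 0 + v 1) = k * D) : coneDensity v = k⁻¹ * (1 / D) := by
  rw [coneDensity, h, one_div, one_div, mul_inv]

theorem abs_det_projectiveMapDeriv_mul_coneDensity (M : Matrix (Fin 3) (Fin 3) ℝ) {w : ℝ × ℝ}
    (hw : 0 < (M *ᵥ homogenize w) 2) :
    |(projectiveMapDeriv M w).det| * coneDensity (homogenize (projectiveMap M w)) =
      |M.det| * coneDensity (M *ᵥ homogenize w) := by
  rw [det_projectiveMapDeriv M hw.ne', projectiveMap, homogenize_dehomogenize hw.ne',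
    coneDensity_smul, inv_pow, inv_inv, abs_div, abs_of_pos (pow_pos hw 3)]
  field_simp

end ConeDensity

section Reverse

/-- The four linear branches of `F`, in the coordinates `(x, y, x + y + z)`. -/
def reverseMatrix : Fin 4 → Matrix (Fin 3) (Fin 3) ℝ :=
  ![!![2, 0, -1; 0, 1, 0; 1, 0, 0], !![1, 0, 0; 0, 2, -1; 0, 1, 0],
    !![1, 0, 0; 0, 1, 0; -1, -1, 1], !![-2, 0, 1; 0, -2, 1; 0, 0, 1]]

noncomputable def reverseInvMatrix : Fin 4 → Matrix (Fin 3) (Fin 3) ℝ :=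
  ![!![0, 0, 1; 0, 1, 0; -1, 0, 2], !![1, 0, 0; 0, 0, 1; 0, -1, 2],
    !![1, 0, 0; 0, 1, 0; 1, 1, 1], !![-2⁻¹, 0, 2⁻¹; 0, -2⁻¹, 2⁻¹; 0, 0, 1]]

def reverseRegion : Fin 4 → Set (ℝ × ℝ) :=
  ![{p | p ∈ simplexT ∧ 1 / 2 < p.1}, {p | p ∈ simplexT ∧ 1 / 2 < p.2},
    {p | p ∈ simplexT ∧ p.1 + p.2 < 1 / 2},
    {p | p ∈ simplexT ∧ p.1 < 1 / 2 ∧ p.2 < 1 / 2 ∧ 1 / 2 < p.1 + p.2}]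

theorem reverseMatrix_mul_reverseInvMatrix (i : Fin 4) :
    reverseMatrix i * reverseInvMatrix i = 1 := by
  fin_cases i <;> simp [reverseMatrix, reverseInvMatrix, one_fin_three]

theorem reverseInvMatrix_mul_reverseMatrix (i : Fin 4) :
    reverseInvMatrix i * reverseMatrix i = 1 := by
  fin_cases i <;> simp [reverseMatrix, reverseInvMatrix, one_fin_three]

theorem reverseRegion_subset_simplexT (i : Fin 4) : reverseRegion i ⊆ simplexT := by
  fin_cases i <;> exact fun p hp => hp.1

theorem pairwise_disjoint_reverseRegion : Pairwise (Disjoint on reverseRegion) := by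
  intro i j hij
  fin_cases i <;> fin_cases j <;> first
    | exact absurd rfl hij
    | exact disjoint_left.2 fun p hp hq => by
        simp [reverseRegion, simplexT] at hp hq; linarith

theorem reverseRegion_ae_eq_simplexT : ⋃ i, reverseRegion i =ᵐ[volume] simplexT := by
  have hline : ∀ L : (ℝ × ℝ) →ₗ[ℝ] ℝ, L ≠ 0 → volume (L ⁻¹' {1 / 2}) = 0 :=
    fun L hL => addHaar_preimage_singleton_eq_zero volume hL _
  have hfst : LinearMap.fst ℝ ℝ ℝ ≠ 0 := fun h => by simpa using LinearMap.congr_fun h (1, 0)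
  have hsnd : LinearMap.snd ℝ ℝ ℝ ≠ 0 := fun h => by simpa using LinearMap.congr_fun h (0, 1)
  have hsum : LinearMap.fst ℝ ℝ ℝ + LinearMap.snd ℝ ℝ ℝ ≠ 0 := fun h => by
    simpa using LinearMap.congr_fun h (1, 0)
  refine ae_eq_set.2 ⟨?_, measure_mono_null ?_
    (measure_union_null (measure_union_null (hline _ hfst) (hline _ hsnd)) (hline _ hsum))⟩
  · rw [sdiff_eq_empty.2 (iUnion_subset reverseRegion_subset_simplexT), measure_empty]
  · rintro p ⟨hp, hnot⟩
    by_contra h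
    simp only [mem_union, mem_preimage, mem_singleton_iff, not_or, LinearMap.add_apply,
      LinearMap.fst_apply, LinearMap.snd_apply] at h
    obtain ⟨⟨e0, e1⟩, e2⟩ := h
    refine hnot (mem_iUnion.2 ?_)
    rcases lt_or_gt_of_ne e0 with h0 | h0
    · rcases lt_or_gt_of_ne e1 with h1 | h1
      · rcases lt_or_gt_of_ne e2 with h2 | h2
        · exact ⟨2, hp, h2⟩
        · exact ⟨3, hp, h0, h1, h2⟩
      · exact ⟨1, hp, h1⟩
    · exact ⟨0, hp, h0⟩

theorem revProj_eqOn_reverseRegion (i : Fin 4) :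
    EqOn revProj (projectiveMap (reverseMatrix i)) (reverseRegion i) := by
  fin_cases i <;> rintro p ⟨⟨hx, hy, hxy⟩, hp⟩ <;>
    simp only [projectiveMap, dehomogenize, mulVec_homogenize_apply, reverseMatrix, of_apply,
      Fin.zero_eta, Fin.mk_one, Fin.reduceFinMk, Fin.isValue, cons_val_zero, cons_val_one,
      cons_val', cons_val_fin_one, cons_val]
  · rw [revProj, if_pos hp, Prod.mk.injEq]
    constructor <;> ring
  · rw [revProj, if_neg (by linarith), if_pos hp, Prod.mk.injEq]
    constructor <;> ring
  · rw [revProj, if_neg (by linarith), if_neg (by linarith), if_pos (by linarith), Prod.mk.injEq]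
    constructor <;> ring
  · rw [revProj, if_neg (by linarith), if_neg (by linarith), if_neg (by linarith), Prod.mk.injEq]
    constructor <;> ring

theorem reverseMatrix_mulVec_homogenize_two_pos (i : Fin 4) {p : ℝ × ℝ}
    (hp : p ∈ reverseRegion i) : 0 < (reverseMatrix i *ᵥ homogenize p) 2 := by
  obtain ⟨hx, hy, hxy⟩ := reverseRegion_subset_simplexT i hp
  fin_cases i <;> simp [mulVec_homogenize_apply, reverseMatrix] <;> linarith

theorem reverseInvMatrix_mulVec_homogenize_two_pos (i : Fin 4) {w : ℝ × ℝ}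
    (hw : w ∈ simplexT) : 0 < (reverseInvMatrix i *ᵥ homogenize w) 2 := by
  obtain ⟨hu, hv, huv⟩ := hw
  fin_cases i <;> simp [mulVec_homogenize_apply, reverseInvMatrix] <;> linarith

theorem mapsTo_revProj_reverseRegion (i : Fin 4) :
    MapsTo revProj (reverseRegion i) simplexT := by
  intro p hp
  have hd := reverseMatrix_mulVec_homogenize_two_pos i hp
  have h1 := projectiveMap_fst_mul _ hd.ne'
  have h2 := projectiveMap_snd_mul _ hd.ne'
  rw [revProj_eqOn_reverseRegion i hp]
  -- with `d > 0`, every linear condition on `q` is a linear condition on `(q.1 * d, q.2 * d, d)`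
  generalize projectiveMap (reverseMatrix i) p = q at h1 h2
  fin_cases i <;> obtain ⟨⟨hx, hy, hxy⟩, hp⟩ := hp <;>
    simp only [mulVec_homogenize_apply, reverseMatrix, of_apply, Fin.zero_eta, Fin.mk_one,
      Fin.reduceFinMk, Fin.isValue, cons_val_zero, cons_val_one, cons_val', cons_val_fin_one,
      cons_val] at hd h1 h2 <;>
    refine ⟨?_, ?_, ?_⟩ <;> nlinarith

theorem mapsTo_projectiveMap_reverseInvMatrix (i : Fin 4) :
    MapsTo (projectiveMap (reverseInvMatrix i)) simplexT (reverseRegion i) := by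
  intro w hw
  have hd := reverseInvMatrix_mulVec_homogenize_two_pos i hw
  have h1 := projectiveMap_fst_mul _ hd.ne'
  have h2 := projectiveMap_snd_mul _ hd.ne'
  obtain ⟨hu, hv, huv⟩ := hw
  generalize projectiveMap (reverseInvMatrix i) w = q at h1 h2
  fin_cases i <;>
    simp only [mulVec_homogenize_apply, reverseInvMatrix, of_apply, Fin.zero_eta, Fin.mk_one,
      Fin.reduceFinMk, Fin.isValue, cons_val_zero, cons_val_one, cons_val', cons_val_fin_one,
      cons_val] at hd h1 h2 <;>
    refine ⟨⟨?_, ?_, ?_⟩, ?_⟩ <;> (try refine ⟨?_, ?_, ?_⟩) <;> nlinarith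

theorem invOn_projectiveMap_reverseInvMatrix (i : Fin 4) :
    InvOn (projectiveMap (reverseInvMatrix i)) revProj (reverseRegion i) simplexT := by
  constructor
  · intro p hp
    rw [revProj_eqOn_reverseRegion i hp, projectiveMap_projectiveMap _ _
      (reverseMatrix_mulVec_homogenize_two_pos i hp).ne', reverseInvMatrix_mul_reverseMatrix,
      projectiveMap_one]
  · intro w hw
    rw [revProj_eqOn_reverseRegion i (mapsTo_projectiveMap_reverseInvMatrix i hw),
      projectiveMap_projectiveMap _ _ (reverseInvMatrix_mulVec_homogenize_two_pos i hw).ne',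
      reverseMatrix_mul_reverseInvMatrix, projectiveMap_one]

theorem sum_abs_det_mul_coneDensity_reverseInvMatrix {w : ℝ × ℝ} (hw : w ∈ simplexT) :
    ∑ i, |(reverseInvMatrix i).det| * coneDensity (reverseInvMatrix i *ᵥ homogenize w) =
      coneDensity (homogenize w) := by
  obtain ⟨hu, hv, huv⟩ := hw
  have h1 : 1 - w.1 ≠ 0 := by linarith
  have h2 : 1 - w.2 ≠ 0 := by linarith
  have h3 : w.1 + w.2 ≠ 0 := by linarith
  have h4 : 2 - w.1 - w.2 ≠ 0 := by linarith
  have h5 : 1 + w.1 ≠ 0 := by linarith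
  have h6 : 1 + w.2 ≠ 0 := by linarith
  rw [Fin.sum_univ_four,
    coneDensity_of_denom_eq (v := reverseInvMatrix 0 *ᵥ homogenize w) (k := 1)
      (D := (1 - w.1) * (2 - w.1 - w.2) * (1 + w.2))
      (by simp only [mulVec_homogenize_apply, reverseInvMatrix, of_apply, cons_val]; ring),
    coneDensity_of_denom_eq (v := reverseInvMatrix 1 *ᵥ homogenize w) (k := 1)
      (D := (1 - w.2) * (2 - w.1 - w.2) * (1 + w.1))
      (by simp only [mulVec_homogenize_apply, reverseInvMatrix, of_apply, cons_val]; ring),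
    coneDensity_of_denom_eq (v := reverseInvMatrix 2 *ᵥ homogenize w) (k := 1)
      (D := (1 + w.1) * (1 + w.2) * (w.1 + w.2))
      (by simp only [mulVec_homogenize_apply, reverseInvMatrix, of_apply, cons_val]; ring),
    coneDensity_of_denom_eq (v := reverseInvMatrix 3 *ᵥ homogenize w) (k := 1 / 8)
      (D := (1 + w.1) * (1 + w.2) * (2 - w.1 - w.2))
      (by simp only [mulVec_homogenize_apply, reverseInvMatrix, of_apply, cons_val]; ring),
    coneDensity_homogenize]
  simp [reverseInvMatrix, det_fin_three]
  field_simp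
  ring

theorem sum_ofReal_abs_det_mul_density {w : ℝ × ℝ} (hw : w ∈ simplexT) :
    ∑ i, ENNReal.ofReal |(projectiveMapDeriv (reverseInvMatrix i) w).det| *
        ENNReal.ofReal (coneDensity (homogenize (projectiveMap (reverseInvMatrix i) w))) =
      ENNReal.ofReal (coneDensity (homogenize w)) := by
  have hpos : ∀ p ∈ simplexT, 0 < coneDensity (homogenize p) := by
    rintro p ⟨hx, hy, hxy⟩
    rw [coneDensity_homogenize]
    exact one_div_pos.2 (mul_pos (mul_pos (by linarith) (by linarith)) (by linarith))
  simp_rw [← ENNReal.ofReal_mul (abs_nonneg _)]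
  rw [← ENNReal.ofReal_sum_of_nonneg fun i _ => mul_nonneg (abs_nonneg _)
    (hpos _ (reverseRegion_subset_simplexT i (mapsTo_projectiveMap_reverseInvMatrix i hw))).le]
  congr 1
  simp_rw [abs_det_projectiveMapDeriv_mul_coneDensity _
    (reverseInvMatrix_mulVec_homogenize_two_pos _ hw)]
  exact sum_abs_det_mul_coneDensity_reverseInvMatrix hw

theorem measurable_revProj : Measurable revProj := by
  unfold revProj
  refine Measurable.ite (measurableSet_lt measurable_const measurable_fst) (by fun_prop) ?_
  refine Measurable.ite (measurableSet_lt measurable_const measurable_snd) (by fun_prop) ?_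
  refine Measurable.ite (measurableSet_lt measurable_const ?_) (by fun_prop) (by fun_prop)
  fun_prop

theorem measurableSet_simplexT : MeasurableSet simplexT :=
  (measurableSet_lt measurable_const measurable_fst).inter
    ((measurableSet_lt measurable_const measurable_snd).inter
      (measurableSet_lt (measurable_fst.add measurable_snd) measurable_const))

end Reverse

/-- The measure with density `1/((1-x)(1-y)(1-z))` on the unit simplex is invariant
under the projective Reverse algorithm. -/
theorem stmt_7 : revMeasure.map revProj = revMeasure := by
  have hrev : revMeasure =
      (volume.restrict simplexT).withDensity fun p => ENNReal.ofReal (coneDensity (homogenize p)) :=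
    rfl
  have hρ : Measurable fun p : ℝ × ℝ => ENNReal.ofReal (coneDensity (homogenize p)) := by
    simp only [coneDensity_homogenize]
    fun_prop
  rw [hrev, map_withDensity_eq_withDensity_sum_of_inverseBranches volume measurable_revProj
    measurableSet_simplexT hρ pairwise_disjoint_reverseRegion reverseRegion_ae_eq_simplexT
    mapsTo_revProj_reverseRegion mapsTo_projectiveMap_reverseInvMatrix
    invOn_projectiveMap_reverseInvMatrix fun i w hw => (hasFDerivAt_projectiveMap _
      (reverseInvMatrix_mulVec_homogenize_two_pos i hw).ne').hasFDerivWithinAt]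
  exact withDensity_congr_ae (ae_restrict_of_forall_mem measurableSet_simplexT
    fun w hw => sum_ofReal_abs_det_mul_density hw)
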